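/- (Erdős 1964, graph case) For every r ≥ 2 and ε > 0 there exists δ > 0 such that for all sufficiently large n: every graph G on n vertices containing at least ε·n^r copies of K_r contains a copy of the complete r-partite graph with all r parts of size ⌊δ(log n)^{1/(r-1)}⌋. -/

import Mathlib

open SimpleGraph

/-- `H` is contained in `G` as a (not necessarily induced) subgraph. -/
def Contains {α β : Type*} (H : SimpleGraph α) (G : SimpleGraph β) : Prop :=
  ∃ f : H →g G, Function.Injective f

open Finset
open scoped Nat

/-! Erdős' argument: induction on the clique size, with the number `n` of vertices fixed while
the ground set `W` shrinks. If `W` spans `β n^(k+1)` cliques of size `k + 1`, a `k`-clique of `W`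
has on average `β n` common neighbours in `W`, so at least `(β/2) n^k` of them have at least
`β n / 2`. Double counting the pairs `(K, T)` with `T` an `m`-set in the common neighbourhood of
the `k`-clique `K` gives an `m`-set `T ⊆ W` whose common neighbourhood spans `(β/2)(β/4)^m n^k`
cliques of size `k`; recursing there yields the remaining parts, all joined to `T`. Along the
`r - 1` steps the density stays above `(β/4)^((m+2)^(r-1))`, which beats `m / n` as long as
`m ≤ δ (log n)^(1/(r-1))`. -/

theorem Finset.sum_le_card_filter_le_mul_add {ι : Type*} (s : Finset ι) (f : ι → ℝ)
    {a M : ℝ} (ha : 0 ≤ a) (hM : ∀ i ∈ s, f i ≤ M) :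
    ∑ i ∈ s, f i ≤ #{i ∈ s | a ≤ f i} * M + #s * a := by
  rw [← sum_filter_add_sum_filter_not s (fun i => a ≤ f i)]
  gcongr
  · simpa using sum_le_card_nsmul _ f M fun i hi => hM i (mem_filter.1 hi).1
  · calc ∑ i ∈ s with ¬a ≤ f i, f i ≤ #{i ∈ s | ¬a ≤ f i} * a := by
          simpa using sum_le_card_nsmul _ f a fun i hi => (not_le.1 (mem_filter.1 hi).2).le
      _ ≤ #s * a := by gcongr; exact filter_subset _ _

theorem Nat.pow_mul_choose_le_choose {a n m : ℕ} {c : ℝ} (hc : 0 ≤ c)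
    (h : c * n ≤ (a + 1 - m : ℕ)) : c ^ m * n.choose m ≤ a.choose m := by
  have hfact : (0 : ℝ) < m ! := by exact_mod_cast m.factorial_pos
  have hn : (n.choose m : ℝ) * m ! ≤ (n : ℝ) ^ m := by
    rw [← le_div_iff₀ hfact]; exact_mod_cast Nat.choose_le_pow_div m n
  have ha : ((a + 1 - m : ℕ) : ℝ) ^ m ≤ a.choose m * m ! := by
    rw [← div_le_iff₀ hfact]; exact Nat.pow_le_choose m a
  refine le_of_mul_le_mul_right ?_ hfact
  calc c ^ m * n.choose m * m ! = c ^ m * (n.choose m * m !) := by ring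
    _ ≤ c ^ m * (n : ℝ) ^ m := by gcongr
    _ = (c * n) ^ m := (mul_pow _ _ _).symm
    _ ≤ ((a + 1 - m : ℕ) : ℝ) ^ m := by gcongr
    _ ≤ a.choose m * m ! := ha

theorem le_pow_mul_of_le_mul_log_rpow {c δ : ℝ} (hc0 : 0 < c) (hc1 : c ≤ 1) (hδ0 : 0 < δ)
    (hδc : 6 * δ * (1 - Real.log c) ≤ 1) {p m n : ℕ} (hp : p ≠ 0) (hm : 0 < m)
    (hmn : (m : ℝ) ≤ δ * Real.log n ^ (1 / (p : ℝ))) :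
    (m : ℝ) ≤ c ^ (m + 2) ^ p * n := by
  have hlogc : Real.log c ≤ 0 := Real.log_nonpos hc0.le hc1
  have hδ : δ ≤ 1 / 6 := by nlinarith
  have ht0 : 0 ≤ Real.log n := Real.log_natCast_nonneg n
  have hLp : (Real.log n ^ (1 / (p : ℝ))) ^ p = Real.log n := by
    rw [one_div]; exact Real.rpow_inv_natCast_pow ht0 hp
  have hL0 : 0 ≤ Real.log n ^ (1 / (p : ℝ)) := Real.rpow_nonneg ht0 _
  generalize Real.log n ^ (1 / (p : ℝ)) = L at hmn hLp hL0
  generalize ht : Real.log n = t at hmn hLp ht0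
  have hm1 : (1 : ℝ) ≤ m := by exact_mod_cast hm
  have hL1 : 1 ≤ L := by nlinarith
  have hLt : L ≤ t := hLp ▸ le_self_pow₀ hL1 hp
  have hpow : ((m : ℝ) + 2) ^ p ≤ 3 * δ * t :=
    calc ((m : ℝ) + 2) ^ p ≤ (3 * δ * L) ^ p := by gcongr; linarith
      _ = (3 * δ) ^ p * t := by rw [mul_pow, hLp]
      _ ≤ 3 * δ * t := by gcongr; exact pow_le_of_le_one (by positivity) (by linarith) hp
  have hn : (n : ℝ) = Real.exp t := by
    rw [← ht, Real.exp_log]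
    rcases Nat.eq_zero_or_pos n with rfl | hn
    · simp at ht; linarith
    · exact_mod_cast hn
  calc (m : ℝ) ≤ t / 2 + 1 := by nlinarith
    _ ≤ Real.exp (t / 2) := by linarith [Real.add_one_le_exp (t / 2)]
    _ ≤ Real.exp (((m + 2) ^ p : ℕ) * Real.log c + t) := by
        gcongr; push_cast; nlinarith
    _ = c ^ (m + 2) ^ p * n := by rw [hn, Real.exp_add, Real.exp_nat_mul, Real.exp_log hc0]

namespace SimpleGraph

variable {V : Type*} {G : SimpleGraph V}

variable (G) in
def PairwiseJoined {ι : Type*} (A : ι → Finset V) : Prop :=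
  Pairwise fun i j => ∀ x ∈ A i, ∀ y ∈ A j, G.Adj x y

theorem contains_completeMultipartiteGraph_of_pairwiseJoined {ι : Type*} {m : ℕ}
    {A : ι → Finset V} (hA : ∀ i, #(A i) = m) (h : G.PairwiseJoined A) :
    Contains (completeMultipartiteGraph fun _ : ι => Fin m) G := by
  let f : (Σ _ : ι, Fin m) → V := fun x => (A x.1).equivFin.symm (Fin.cast (hA x.1).symm x.2)
  have hadj {x y : Σ _ : ι, Fin m} (hxy : x.1 ≠ y.1) : G.Adj (f x) (f y) :=
    h hxy _ (coe_mem _) _ (coe_mem _)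
  refine ⟨⟨f, hadj⟩, fun ⟨i, k⟩ ⟨j, l⟩ hkl => ?_⟩
  obtain rfl : i = j := by_contra fun hij => (hadj hij).ne hkl
  change f ⟨i, k⟩ = f ⟨i, l⟩ at hkl
  obtain rfl : k = l := by simpa [f] using hkl
  rfl

section

variable [DecidableRel G.Adj]

variable (G) in
def commonNbhd (W K : Finset V) : Finset V := {v ∈ W | ∀ x ∈ K, G.Adj v x}

@[simp]
theorem mem_commonNbhd {W K : Finset V} {v : V} :
    v ∈ G.commonNbhd W K ↔ v ∈ W ∧ ∀ x ∈ K, G.Adj v x :=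
  mem_filter

theorem commonNbhd_subset (W K : Finset V) : G.commonNbhd W K ⊆ W := filter_subset _ _

theorem pairwiseJoined_cons {p : ℕ} {W T : Finset V} {A : Fin p → Finset V}
    (hA : ∀ i, A i ⊆ G.commonNbhd W T) (h : G.PairwiseJoined A) :
    G.PairwiseJoined (Fin.cons T A : Fin (p + 1) → Finset V) := by
  have hT : ∀ i, ∀ x ∈ A i, ∀ y ∈ T, G.Adj x y := fun i x hx =>
    (mem_commonNbhd.1 (hA i hx)).2
  intro i j hij
  cases i using Fin.cases <;> cases j using Fin.cases
  · exact absurd rfl hij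
  · simpa using fun x hx y hy => (hT _ y hy x hx).symm
  · simpa using hT _
  · simpa using h (fun h' => hij (congrArg _ h'))

section

variable [DecidableEq V]

variable (G) in
def cliquesIn (k : ℕ) (W : Finset V) : Finset (Finset V) := {S ∈ W.powerset | G.IsNClique k S}

@[simp]
theorem mem_cliquesIn {k : ℕ} {W S : Finset V} :
    S ∈ G.cliquesIn k W ↔ S ⊆ W ∧ G.IsNClique k S := by
  simp [cliquesIn]

theorem card_cliquesIn_univ [Fintype V] (k : ℕ) :
    #(G.cliquesIn k univ) = Nat.card {S : Finset V // G.IsNClique k S} := by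
  rw [Nat.card_eq_fintype_card, Fintype.card_subtype, cliquesIn, powerset_univ]

theorem card_cliquesIn_le_pow {k n : ℕ} {W : Finset V} (hW : #W ≤ n) :
    #(G.cliquesIn k W) ≤ n ^ k :=
  calc #(G.cliquesIn k W) ≤ #(W.powersetCard k) :=
        card_le_card fun S hS => by
          rw [mem_cliquesIn] at hS
          exact mem_powersetCard.2 ⟨hS.1, hS.2.card_eq⟩
    _ = (#W).choose k := card_powersetCard _ _
    _ ≤ n.choose k := Nat.choose_le_choose _ hW
    _ ≤ n ^ k := Nat.choose_le_pow _ _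

theorem card_cliquesIn_succ_le_sum_card_commonNbhd (k : ℕ) (W : Finset V) :
    #(G.cliquesIn (k + 1) W) ≤ ∑ K ∈ G.cliquesIn k W, #(G.commonNbhd W K) := by
  rw [← card_sigma]
  refine card_le_card_of_surjOn (fun p => insert p.2 p.1) fun S hS => ?_
  obtain ⟨hSW, hS⟩ := mem_cliquesIn.1 hS
  obtain ⟨v, hv⟩ : S.Nonempty := card_pos.1 (by rw [hS.card_eq]; omega)
  refine ⟨⟨S.erase v, v⟩, ?_, insert_erase hv⟩
  simp only [coe_sigma, Set.mem_sigma_iff, mem_coe, mem_cliquesIn, mem_commonNbhd]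
  exact ⟨⟨(erase_subset _ _).trans hSW, hS.erase_of_mem hv⟩, hSW hv,
    fun x hx => hS.isClique hv (mem_of_mem_erase hx) (ne_of_mem_erase hx).symm⟩

theorem sum_choose_card_commonNbhd_le (k m : ℕ) (W : Finset V) :
    ∑ K ∈ G.cliquesIn k W, (#(G.commonNbhd W K)).choose m ≤
      ∑ T ∈ W.powersetCard m, #(G.cliquesIn k (G.commonNbhd W T)) := by
  have above (K : Finset V) : (#(G.commonNbhd W K)).choose m =
      #((W.powersetCard m).bipartiteAbove (fun K T => T ⊆ G.commonNbhd W K) K) := by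
    rw [← card_powersetCard]
    congr 1
    ext T
    simp only [mem_powersetCard, mem_bipartiteAbove]
    exact ⟨fun h => ⟨⟨h.1.trans (commonNbhd_subset _ _), h.2⟩, h.1⟩,
      fun h => ⟨h.2, h.1.2⟩⟩
  have below (T : Finset V) (hT : T ⊆ W) :
      (G.cliquesIn k W).bipartiteBelow (fun K T => T ⊆ G.commonNbhd W K) T ⊆
        G.cliquesIn k (G.commonNbhd W T) := by
    intro K hK
    simp only [mem_bipartiteBelow, mem_cliquesIn] at hK ⊢
    refine ⟨fun x hx => (mem_commonNbhd.2 ⟨hK.1.1 hx, fun t ht => ?_⟩), hK.1.2⟩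
    exact ((mem_commonNbhd.1 (hK.2 ht)).2 x hx).symm
  simp_rw [above]
  rw [sum_card_bipartiteAbove_eq_sum_card_bipartiteBelow]
  exact sum_le_sum fun T hT => card_le_card (below T (mem_powersetCard.1 hT).1)

theorem card_cliquesIn_large_commonNbhd_ge {k n : ℕ} {W : Finset V} {β : ℝ} (hβ : 0 ≤ β)
    (hn : 0 < n) (hW : #W ≤ n) (hcl : β * n ^ (k + 1) ≤ #(G.cliquesIn (k + 1) W)) :
    β / 2 * n ^ k ≤ #{K ∈ G.cliquesIn k W | β * n / 2 ≤ #(G.commonNbhd W K)} := by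
  have hn' : (0 : ℝ) < n := by exact_mod_cast hn
  have hdeg : ∀ K ∈ G.cliquesIn k W, (#(G.commonNbhd W K) : ℝ) ≤ n := fun K _ => by
    exact_mod_cast (card_le_card (commonNbhd_subset W K)).trans hW
  have hQ : (#(G.cliquesIn k W) : ℝ) ≤ n ^ k := by exact_mod_cast card_cliquesIn_le_pow hW
  have hsum : β * n ^ (k + 1) ≤ ∑ K ∈ G.cliquesIn k W, (#(G.commonNbhd W K) : ℝ) :=
    hcl.trans (by exact_mod_cast card_cliquesIn_succ_le_sum_card_commonNbhd k W)
  have hmarkov := sum_le_card_filter_le_mul_add _ _ (by positivity : 0 ≤ β * n / 2) hdeg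
  have hQ' := mul_le_mul_of_nonneg_right hQ (by positivity : 0 ≤ β * n / 2)
  refine le_of_mul_le_mul_right ?_ hn'
  rw [pow_succ] at hsum
  linarith

theorem exists_card_cliquesIn_commonNbhd_ge {k m n : ℕ} {W : Finset V} {β : ℝ} (hβ : 0 < β)
    (hn : 0 < n) (hW : #W ≤ n) (hm : (m : ℝ) ≤ β / 4 * n)
    (hcl : β * n ^ (k + 1) ≤ #(G.cliquesIn (k + 1) W)) :
    ∃ T ⊆ W, #T = m ∧
      β / 2 * (β / 4) ^ m * n ^ k ≤ #(G.cliquesIn k (G.commonNbhd W T)) := by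
  set a := ⌈β * n / 2⌉₊
  have ha : β * n / 2 ≤ a := Nat.le_ceil _
  have hma : m ≤ a := by
    have : β / 4 * n ≤ β * n / 2 := by have := n.cast_nonneg (α := ℝ); nlinarith
    exact_mod_cast (hm.trans this).trans ha
  have hchoose : (β / 4) ^ m * n.choose m ≤ a.choose m := by
    refine Nat.pow_mul_choose_le_choose (by positivity) ?_
    rw [Nat.cast_sub (by omega)]
    push_cast
    linarith
  have hlarge := card_cliquesIn_large_commonNbhd_ge hβ.le hn hW hcl
  have hsum : β / 2 * n ^ k * a.choose m ≤
      ∑ T ∈ W.powersetCard m, (#(G.cliquesIn k (G.commonNbhd W T)) : ℝ) := by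
    set B := {K ∈ G.cliquesIn k W | β * n / 2 ≤ #(G.commonNbhd W K)}
    calc β / 2 * n ^ k * a.choose m ≤ #B * a.choose m :=
          mul_le_mul_of_nonneg_right hlarge (by positivity)
      _ ≤ ∑ K ∈ B, ((#(G.commonNbhd W K)).choose m : ℝ) := by
          rw [← nsmul_eq_mul]
          refine card_nsmul_le_sum _ _ _ fun K hK => ?_
          exact_mod_cast Nat.choose_le_choose m (Nat.ceil_le.2 (mem_filter.1 hK).2)
      _ ≤ ∑ K ∈ G.cliquesIn k W, ((#(G.commonNbhd W K)).choose m : ℝ) :=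
          sum_le_sum_of_subset_of_nonneg (filter_subset _ _) fun _ _ _ => by positivity
      _ ≤ _ := by exact_mod_cast sum_choose_card_commonNbhd_le k m W
  have havg : ∑ _T ∈ W.powersetCard m, β / 2 * (β / 4) ^ m * (n : ℝ) ^ k ≤
      β / 2 * n ^ k * a.choose m := by
    have hcard : (#(W.powersetCard m) : ℝ) ≤ n.choose m := by
      rw [card_powersetCard]; exact_mod_cast Nat.choose_le_choose m hW
    rw [sum_const, nsmul_eq_mul]
    calc (#(W.powersetCard m) : ℝ) * (β / 2 * (β / 4) ^ m * n ^ k)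
        ≤ n.choose m * (β / 2 * (β / 4) ^ m * n ^ k) := by gcongr
      _ = β / 2 * n ^ k * ((β / 4) ^ m * n.choose m) := by ring
      _ ≤ β / 2 * n ^ k * a.choose m := by gcongr
  have hne : (W.powersetCard m).Nonempty := by
    have : (0 : ℝ) < a.choose m := by exact_mod_cast Nat.choose_pos hma
    refine nonempty_of_sum_ne_zero (ne_of_gt (lt_of_lt_of_le ?_ hsum))
    positivity
  obtain ⟨T, hT, hTcl⟩ := exists_le_of_sum_le hne (havg.trans hsum)
  exact ⟨T, (mem_powersetCard.1 hT).1, (mem_powersetCard.1 hT).2, hTcl⟩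

theorem exists_pairwiseJoined_of_many_cliques {m n : ℕ} (hm : 0 < m) (p : ℕ) (W : Finset V)
    (β : ℝ) (hW : #W ≤ n) (hβ0 : 0 < β) (hβ1 : β ≤ 1)
    (hmn : (m : ℝ) ≤ (β / 4) ^ (m + 2) ^ p * n)
    (hcl : β * n ^ (p + 1) ≤ #(G.cliquesIn (p + 1) W)) :
    ∃ A : Fin (p + 1) → Finset V,
      (∀ i, A i ⊆ W) ∧ (∀ i, #(A i) = m) ∧ G.PairwiseJoined A := by
  induction p generalizing W β with
  | zero =>
    have hW1 : #(G.cliquesIn 1 W) ≤ #W := by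
      simpa using card_cliquesIn_le_pow (G := G) (k := 1) (le_refl #W)
    have hmW : (m : ℝ) ≤ #W :=
      calc (m : ℝ) ≤ β / 4 * n := by simpa using hmn
        _ ≤ β * n := by gcongr; linarith
        _ ≤ #(G.cliquesIn 1 W) := by simpa using hcl
        _ ≤ #W := by exact_mod_cast hW1
    obtain ⟨T, hTW, hT⟩ := exists_subset_card_eq (by exact_mod_cast hmW : m ≤ #W)
    exact ⟨fun _ => T, fun _ => hTW, fun _ => hT, fun i j hij => absurd (by omega) hij⟩
  | succ p ih =>
    have hc0 : 0 < β / 4 := by positivity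
    have hc1 : β / 4 ≤ 1 := by linarith
    have hn : 0 < n := by
      rcases Nat.eq_zero_or_pos n with rfl | hn
      · simp at hmn; omega
      · exact hn
    have hm' : (m : ℝ) ≤ β / 4 * n := hmn.trans <| by
      gcongr; exact pow_le_of_le_one hc0.le hc1 (pow_ne_zero _ (by omega))
    obtain ⟨T, hTW, hTm, hTcl⟩ := exists_card_cliquesIn_commonNbhd_ge hβ0 hn hW hm' hcl
    set β' := β / 2 * (β / 4) ^ m
    -- so the hypothesis on `m` keeps its shape one level down, with `β'` for `β`
    have hβ' : (β / 4) ^ (m + 2) ≤ β' / 4 := by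
      have : (β / 4) ^ 2 ≤ β / 8 := by nlinarith
      calc (β / 4) ^ (m + 2) = (β / 4) ^ m * (β / 4) ^ 2 := pow_add _ _ _
        _ ≤ (β / 4) ^ m * (β / 8) := by gcongr
        _ = β' / 4 := by ring
    obtain ⟨A, hAW, hAm, hA⟩ := ih (G.commonNbhd W T) β'
      ((card_le_card (commonNbhd_subset W T)).trans hW) (by positivity)
      (mul_le_one₀ (by linarith) (by positivity) (pow_le_one₀ hc0.le hc1))
      (hmn.trans <| by rw [_root_.pow_succ', pow_mul]; gcongr) hTcl
    refine ⟨Fin.cons T A, fun i => ?_, fun i => ?_, pairwiseJoined_cons hAW hA⟩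
    · cases i using Fin.cases
      · simpa using hTW
      · simpa using (hAW _).trans (commonNbhd_subset W T)
    · cases i using Fin.cases <;> simp [hTm, hAm]

end

end

end SimpleGraph

theorem stmt13 (r : ℕ) (hr : 2 ≤ r) (ε : ℝ) (hε : 0 < ε) :
    ∃ δ : ℝ, 0 < δ ∧ ∃ N : ℕ, ∀ n ≥ N,
      ∀ G : SimpleGraph (Fin n),
        (ε * (n:ℝ)^r ≤ (Nat.card {S : Finset (Fin n) // G.IsNClique r S} : ℝ)) →
        Contains (SimpleGraph.completeMultipartiteGraph
            fun _ : Fin r => Fin ⌊δ * (Real.log n)^(1/((r:ℝ)-1))⌋₊) G := by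
  classical
  obtain ⟨p, rfl⟩ : ∃ p, r = p + 1 := ⟨r - 1, by omega⟩
  set β := min ε 1
  have hβ0 : 0 < β := lt_min hε one_pos
  have hβ1 : β ≤ 1 := min_le_right _ _
  have hlog : Real.log (β / 4) ≤ 0 := Real.log_nonpos (by positivity) (by linarith)
  have hK : 0 < 1 - Real.log (β / 4) := by linarith
  obtain ⟨δ, hδ0, hδ⟩ : ∃ δ : ℝ, 0 < δ ∧ 6 * δ * (1 - Real.log (β / 4)) ≤ 1 :=
    ⟨1 / (6 * (1 - Real.log (β / 4))), by positivity, le_of_eq (by field_simp)⟩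
  refine ⟨δ, hδ0, 0, fun n _ G hG => ?_⟩
  set m := ⌊δ * Real.log n ^ (1 / (((p + 1 : ℕ) : ℝ) - 1))⌋₊
  rcases Nat.eq_zero_or_pos m with hm | hm
  · rw [hm]
    exact contains_completeMultipartiteGraph_of_pairwiseJoined (A := fun _ => ∅)
      (fun _ => card_empty) fun _ _ _ x hx => absurd hx (notMem_empty x)
  have hfloor : (m : ℝ) ≤ δ * Real.log n ^ (1 / (((p + 1 : ℕ) : ℝ) - 1)) :=
    Nat.floor_le (by positivity)
  have hmn : (m : ℝ) ≤ (β / 4) ^ (m + 2) ^ p * n :=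
    le_pow_mul_of_le_mul_log_rpow (by positivity) (by linarith) hδ0 hδ (by omega) hm
      (by simpa using hfloor)
  have hcl : β * n ^ (p + 1) ≤ #(G.cliquesIn (p + 1) univ) := by
    rw [card_cliquesIn_univ]
    exact (mul_le_mul_of_nonneg_right (min_le_left _ _) (by positivity)).trans hG
  obtain ⟨A, -, hA, hjoin⟩ := exists_pairwiseJoined_of_many_cliques hm p univ β
    ((card_le_univ _).trans_eq (Fintype.card_fin n)) hβ0 hβ1 hmn hcl
  exact contains_completeMultipartiteGraph_of_pairwiseJoined hA hjoin
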